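/- Let A be a normed division algebra and a ∈ A. Then a*a ∈ Re A if and only if a ∈ Re A or a ∈ Im A. (That is, the square of a is real if and only if a is either real or purely imaginary.) -/

import Mathlib

/-!
Write `a = α • 1 + v` with `α = ⟪a, 1⟫` and `v = Im a ⊥ 1`. Polarizing the composition law gives the
exchange identity `⟪ab, cd⟫ + ⟪ad, cb⟫ = 2⟪a, c⟫⟪b, d⟫`, from which `v * v = -‖v‖² • 1`. Hence
`a * a = (α² - ‖v‖²) • 1 + 2α • v`, which is real iff `2α • v` is real; as `v ⊥ 1` this happens
iff `α = 0` (`a` imaginary) or `v = 0` (`a` real).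
-/

open scoped RealInnerProductSpace

/-- A normed division algebra: a real inner product space with an `ℝ`-bilinear
multiplication (not necessarily associative or commutative), a two-sided
multiplicative identity `one ≠ 0`, satisfying `‖a*b‖ = ‖a‖ * ‖b‖`. -/
structure NormedDivisionAlgebra (A : Type*) [NormedAddCommGroup A] [InnerProductSpace ℝ A] where
  mul : A →ₗ[ℝ] A →ₗ[ℝ] A
  one : A
  one_ne_zero : one ≠ 0
  one_mul : ∀ a : A, mul one a = a
  mul_one : ∀ a : A, mul a one = a
  norm_mul : ∀ a b : A, ‖mul a b‖ = ‖a‖ * ‖b‖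

namespace NormedDivisionAlgebra

variable {A : Type*} [NormedAddCommGroup A] [InnerProductSpace ℝ A]

/-- `Re a`: the orthogonal projection of `a` onto the real part `Re A = ℝ · 1`. -/
noncomputable def re (D : NormedDivisionAlgebra A) (a : A) : A :=
  (⟪a, D.one⟫ / ‖D.one‖ ^ 2) • D.one

/-- `Im a`: the orthogonal projection of `a` onto the imaginary part `Im A = (ℝ · 1)ᗮ`. -/
noncomputable def im (D : NormedDivisionAlgebra A) (a : A) : A := a - D.re a

/-- The conjugate `conj a = Re a - Im a`. -/
noncomputable def conj (D : NormedDivisionAlgebra A) (a : A) : A := D.re a - D.im a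

/-- The real part `Re A = ℝ · 1` as a submodule. -/
def ReSub (D : NormedDivisionAlgebra A) : Submodule ℝ A := Submodule.span ℝ {D.one}

/-- The imaginary part `Im A = (ℝ · 1)ᗮ` as a submodule. -/
noncomputable def ImSub (D : NormedDivisionAlgebra A) : Submodule ℝ A := (Submodule.span ℝ {D.one})ᗮ

/-- The commutator `[a, b] = a*b - b*a`. -/
def comm (D : NormedDivisionAlgebra A) (a b : A) : A := D.mul a b - D.mul b a

/-- The associator `[a, b, c] = (a*b)*c - a*(b*c)`. -/
def assoc (D : NormedDivisionAlgebra A) (a b c : A) : A :=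
  D.mul (D.mul a b) c - D.mul a (D.mul b c)

/-- The cross product `a × b = Im (a*b)` (intended for `a, b ∈ Im A`). -/
noncomputable def cross (D : NormedDivisionAlgebra A) (a b : A) : A := D.im (D.mul a b)

end NormedDivisionAlgebra

namespace NormedDivisionAlgebra

variable {A : Type*} [NormedAddCommGroup A] [InnerProductSpace ℝ A] (D : NormedDivisionAlgebra A)

theorem norm_one : ‖D.one‖ = 1 := by
  have h : ‖D.one‖ * ‖D.one‖ = ‖D.one‖ * 1 := by rw [← D.norm_mul, D.one_mul, _root_.mul_one]
  exact mul_left_cancel₀ (norm_ne_zero_iff.mpr D.one_ne_zero) h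

theorem inner_one_one : ⟪D.one, D.one⟫ = 1 := by
  rw [real_inner_self_eq_norm_sq, norm_one, one_pow]

theorem inner_mul_self_mul_self (a b : A) :
    ⟪D.mul a b, D.mul a b⟫ = ⟪a, a⟫ * ⟪b, b⟫ := by
  simp only [real_inner_self_eq_norm_mul_norm, D.norm_mul]
  ring

theorem inner_mul_mul_right (a c b : A) :
    ⟪D.mul a b, D.mul c b⟫ = ⟪a, c⟫ * ⟪b, b⟫ := by
  have hac := D.inner_mul_self_mul_self (a + c) b
  have ha := D.inner_mul_self_mul_self a b
  have hc := D.inner_mul_self_mul_self c b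
  simp only [map_add, LinearMap.add_apply, real_inner_add_add_self] at hac
  linarith

theorem inner_mul_mul_add_inner_mul_mul (a b c d : A) :
    ⟪D.mul a b, D.mul c d⟫ + ⟪D.mul a d, D.mul c b⟫ = 2 * ⟪a, c⟫ * ⟪b, d⟫ := by
  have hbd := D.inner_mul_mul_right a c (b + d)
  have hb := D.inner_mul_mul_right a c b
  have hd := D.inner_mul_mul_right a c d
  simp only [map_add, inner_add_left, inner_add_right] at hbd
  linear_combination hbd - hb - hd + ⟪a, c⟫ * real_inner_comm b d

theorem inner_mul_mul_left (a b d : A) :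
    ⟪D.mul a b, D.mul a d⟫ = ⟪a, a⟫ * ⟪b, d⟫ := by
  have h := D.inner_mul_mul_add_inner_mul_mul a b a d
  rw [real_inner_comm (D.mul a b)] at h
  linarith

theorem mul_self_eq_neg_norm_sq_smul_one {v : A} (hv : ⟪v, D.one⟫ = 0) :
    D.mul v v = (-‖v‖ ^ 2) • D.one := by
  refine ext_inner_right ℝ fun w => ?_
  have hexch := D.inner_mul_mul_add_inner_mul_mul v v D.one w
  have hleft := D.inner_mul_mul_left v w D.one
  rw [D.one_mul, D.one_mul, hv] at hexch
  rw [D.mul_one] at hleft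
  rw [real_inner_smul_left, real_inner_comm w D.one, ← real_inner_self_eq_norm_sq]
  linarith

theorem mem_ReSub_iff {x : A} : x ∈ D.ReSub ↔ ∃ c : ℝ, c • D.one = x :=
  Submodule.mem_span_singleton

theorem smul_one_mem_ReSub (c : ℝ) : c • D.one ∈ D.ReSub :=
  Submodule.smul_mem _ c (Submodule.mem_span_singleton_self _)

theorem mem_ImSub_iff {x : A} : x ∈ D.ImSub ↔ ⟪x, D.one⟫ = 0 := by
  rw [ImSub, Submodule.mem_orthogonal_singleton_iff_inner_right, real_inner_comm]

theorem mem_ReSub_iff_eq_zero_of_mem_ImSub {x : A} (hx : x ∈ D.ImSub) :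
    x ∈ D.ReSub ↔ x = 0 := by
  refine ⟨fun hre => ?_, fun h => h ▸ D.ReSub.zero_mem⟩
  have : x ∈ D.ReSub ⊓ D.ImSub := ⟨hre, hx⟩
  rwa [ReSub, ImSub, Submodule.inf_orthogonal_eq_bot, Submodule.mem_bot] at this

theorem mul_mem_ReSub {x y : A} (hx : x ∈ D.ReSub) (hy : y ∈ D.ReSub) :
    D.mul x y ∈ D.ReSub := by
  obtain ⟨c, rfl⟩ := D.mem_ReSub_iff.mp hx
  obtain ⟨d, rfl⟩ := D.mem_ReSub_iff.mp hy
  simp only [map_smul, LinearMap.smul_apply, D.one_mul, smul_smul]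
  exact D.smul_one_mem_ReSub _

theorem mul_self_mem_ReSub_of_mem_ImSub {v : A} (hv : v ∈ D.ImSub) :
    D.mul v v ∈ D.ReSub := by
  rw [D.mul_self_eq_neg_norm_sq_smul_one (D.mem_ImSub_iff.mp hv)]
  exact D.smul_one_mem_ReSub _

theorem re_eq (a : A) : D.re a = ⟪a, D.one⟫ • D.one := by
  rw [re, norm_one, one_pow, div_one]

theorem re_mem_ReSub (a : A) : D.re a ∈ D.ReSub :=
  D.smul_one_mem_ReSub _

theorem im_mem_ImSub (a : A) : D.im a ∈ D.ImSub := by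
  rw [mem_ImSub_iff, im, re_eq, inner_sub_left, real_inner_smul_left, inner_one_one,
    _root_.mul_one, sub_self]

theorem re_add_im (a : A) : D.re a + D.im a = a :=
  add_sub_cancel (D.re a) a

theorem mem_ReSub_iff_im_eq_zero {a : A} : a ∈ D.ReSub ↔ D.im a = 0 := by
  constructor
  · intro h
    obtain ⟨c, rfl⟩ := D.mem_ReSub_iff.mp h
    rw [im, re_eq, real_inner_smul_left, inner_one_one, _root_.mul_one, sub_self]
  · intro h
    rw [← D.re_add_im a, h, add_zero]
    exact D.re_mem_ReSub a

theorem mul_self_eq (a : A) :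
    D.mul a a = D.mul (D.re a) (D.re a) + D.mul (D.im a) (D.im a)
      + (2 * ⟪a, D.one⟫) • D.im a := by
  conv_lhs => rw [← D.re_add_im a]
  rw [re_eq]
  simp only [map_add, map_smul, LinearMap.add_apply, LinearMap.smul_apply, D.one_mul, D.mul_one]
  module

end NormedDivisionAlgebra

theorem nda_sq_real_iff_real_or_imaginary {A : Type*} [NormedAddCommGroup A]
    [InnerProductSpace ℝ A] (D : NormedDivisionAlgebra A) (a : A) :
    D.mul a a ∈ D.ReSub ↔ (a ∈ D.ReSub ∨ a ∈ D.ImSub) := by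
  have hreal : D.mul (D.re a) (D.re a) + D.mul (D.im a) (D.im a) ∈ D.ReSub :=
    add_mem (D.mul_mem_ReSub (D.re_mem_ReSub a) (D.re_mem_ReSub a))
      (D.mul_self_mem_ReSub_of_mem_ImSub (D.im_mem_ImSub a))
  have himag : (2 * ⟪a, D.one⟫) • D.im a ∈ D.ImSub := D.ImSub.smul_mem _ (D.im_mem_ImSub a)
  rw [D.mul_self_eq, Submodule.add_mem_iff_right _ hreal,
    D.mem_ReSub_iff_eq_zero_of_mem_ImSub himag, smul_eq_zero, mul_eq_zero, D.mem_ImSub_iff,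
    D.mem_ReSub_iff_im_eq_zero, or_iff_right two_ne_zero, or_comm]
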